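/- arXiv:2104.02003 — 2 statements merged into one kernel-verified Lean document; each statement's English description precedes it below -/
import Mathlib

section
/- For every real M > 0 and every λ ∈ {1,2,3}, the sector Z_λ of the standard Stein trisection of Q_M is an analytic polyhedron: there exist finitely many functions f₁,…,f_m : ℂ² → ℂ, each holomorphic on all of ℂ² (i.e. differentiable over ℂ), such that Z_λ = {z ∈ ℂ² : |f_j(z)| ≤ 1 for all j = 1,…,m}. -/
/-!
Each defining condition of `Z_λ` (`|Re z_k| ≤ 1/M`, `|Im z_k| ≤ M`, `φ_λ ≤ 0`, `φ_{λ-1} ≥ 0`) says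
`Re g ≤ c` for a complex-affine `g`, and `Re g ≤ c` is equivalent to `‖exp (g - c)‖ ≤ 1`.
Sets cut out by finitely many conditions `‖f j‖ ≤ 1` with `f j` entire are closed under finite
intersections (concatenate the families), so `Z_λ` is one of them.
-/

/-- The bidisk-like domain `Q_M ⊂ ℂ²`. -/
def QM (M : ℝ) : Set (ℂ × ℂ) :=
  {p | |p.1.re| ≤ 1 / M ∧ |p.1.im| ≤ M ∧ |p.2.re| ≤ 1 / M ∧ |p.2.im| ≤ M}

/-- `φ₁(z₁,z₂) = Re z₂`. -/
def phi1 (p : ℂ × ℂ) : ℝ := p.2.re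

/-- `φ₂(z₁,z₂) = −√3·Re z₁ − Re z₂`. -/
noncomputable def phi2 (p : ℂ × ℂ) : ℝ := -Real.sqrt 3 * p.1.re - p.2.re

/-- `φ₃(z₁,z₂) = √3·Re z₁ − Re z₂`. -/
noncomputable def phi3 (p : ℂ × ℂ) : ℝ := Real.sqrt 3 * p.1.re - p.2.re

/-- First sector of the standard Stein trisection: `φ₁ ≤ 0` and `φ₃ ≥ 0`. -/
noncomputable def Z1 (M : ℝ) : Set (ℂ × ℂ) := {p ∈ QM M | phi1 p ≤ 0 ∧ 0 ≤ phi3 p}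

/-- Second sector: `φ₂ ≤ 0` and `φ₁ ≥ 0`. -/
noncomputable def Z2 (M : ℝ) : Set (ℂ × ℂ) := {p ∈ QM M | phi2 p ≤ 0 ∧ 0 ≤ phi1 p}

/-- Third sector: `φ₃ ≤ 0` and `φ₂ ≥ 0`. -/
noncomputable def Z3 (M : ℝ) : Set (ℂ × ℂ) := {p ∈ QM M | phi3 p ≤ 0 ∧ 0 ≤ phi2 p}

section AnalyticPolyhedron

variable {E : Type*} [NormedAddCommGroup E] [NormedSpace ℂ E]

def IsAnalyticPolyhedron (S : Set E) : Prop :=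
  ∃ (m : ℕ) (f : Fin m → E → ℂ), (∀ j, Differentiable ℂ (f j)) ∧ S = {z | ∀ j, ‖f j z‖ ≤ 1}

namespace IsAnalyticPolyhedron

theorem inter {S T : Set E} (hS : IsAnalyticPolyhedron S) (hT : IsAnalyticPolyhedron T) :
    IsAnalyticPolyhedron (S ∩ T) := by
  obtain ⟨m, f, hf, rfl⟩ := hS
  obtain ⟨n, g, hg, rfl⟩ := hT
  refine ⟨m + n, Fin.append f g, (Fin.forall_fin_add _).2 ⟨?_, ?_⟩, ?_⟩
  · simpa only [Fin.append_left] using hf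
  · simpa only [Fin.append_right] using hg
  · ext z
    simp only [Set.mem_inter_iff, Set.mem_ofPred_eq, Fin.forall_fin_add, Fin.append_left,
      Fin.append_right]

end IsAnalyticPolyhedron

theorem isAnalyticPolyhedron_setOf_re_le {g : E → ℂ} (hg : Differentiable ℂ g) (c : ℝ) :
    IsAnalyticPolyhedron {z | (g z).re ≤ c} := by
  refine ⟨1, fun _ z => Complex.exp (g z - c), fun _ => by fun_prop, ?_⟩
  ext z
  simp [Complex.norm_exp]

theorem isAnalyticPolyhedron_setOf_le_re {g : E → ℂ} (hg : Differentiable ℂ g) (c : ℝ) :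
    IsAnalyticPolyhedron {z | c ≤ (g z).re} := by
  simpa [neg_le_neg_iff] using isAnalyticPolyhedron_setOf_re_le hg.neg (-c)

theorem isAnalyticPolyhedron_setOf_abs_re_le {g : E → ℂ} (hg : Differentiable ℂ g) (c : ℝ) :
    IsAnalyticPolyhedron {z | |(g z).re| ≤ c} := by
  simpa only [abs_le, Set.ofPred_and, and_comm] using
    (isAnalyticPolyhedron_setOf_re_le hg c).inter (isAnalyticPolyhedron_setOf_le_re hg (-c))

theorem isAnalyticPolyhedron_setOf_abs_im_le {g : E → ℂ} (hg : Differentiable ℂ g) (c : ℝ) :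
    IsAnalyticPolyhedron {z | |(g z).im| ≤ c} := by
  simpa using isAnalyticPolyhedron_setOf_abs_re_le (g := fun z => -Complex.I * g z) (by fun_prop) c

end AnalyticPolyhedron

theorem isAnalyticPolyhedron_QM (M : ℝ) : IsAnalyticPolyhedron (QM M) := by
  have re_fst : IsAnalyticPolyhedron {p : ℂ × ℂ | |p.1.re| ≤ 1 / M} :=
    isAnalyticPolyhedron_setOf_abs_re_le differentiable_fst _
  have im_fst : IsAnalyticPolyhedron {p : ℂ × ℂ | |p.1.im| ≤ M} :=
    isAnalyticPolyhedron_setOf_abs_im_le differentiable_fst _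
  have re_snd : IsAnalyticPolyhedron {p : ℂ × ℂ | |p.2.re| ≤ 1 / M} :=
    isAnalyticPolyhedron_setOf_abs_re_le differentiable_snd _
  have im_snd : IsAnalyticPolyhedron {p : ℂ × ℂ | |p.2.im| ≤ M} :=
    isAnalyticPolyhedron_setOf_abs_im_le differentiable_snd _
  simpa only [QM, Set.ofPred_and] using re_fst.inter (im_fst.inter (re_snd.inter im_snd))

theorem isAnalyticPolyhedron_sep_QM (M : ℝ) {φ ψ : ℂ × ℂ → ℂ} (hφ : Differentiable ℂ φ)
    (hψ : Differentiable ℂ ψ) :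
    IsAnalyticPolyhedron {p ∈ QM M | (φ p).re ≤ 0 ∧ 0 ≤ (ψ p).re} :=
  (isAnalyticPolyhedron_QM M).inter
    ((isAnalyticPolyhedron_setOf_re_le hφ 0).inter (isAnalyticPolyhedron_setOf_le_re hψ 0))

theorem phi1_eq_re (p : ℂ × ℂ) : phi1 p = p.2.re := rfl

theorem phi2_eq_re (p : ℂ × ℂ) : phi2 p = (-(Real.sqrt 3 : ℂ) * p.1 - p.2).re := by
  simp [phi2]

theorem phi3_eq_re (p : ℂ × ℂ) : phi3 p = ((Real.sqrt 3 : ℂ) * p.1 - p.2).re := by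
  simp [phi3]

theorem isAnalyticPolyhedron_Z1 (M : ℝ) : IsAnalyticPolyhedron (Z1 M) := by
  simpa only [Z1, phi1_eq_re, phi3_eq_re] using
    isAnalyticPolyhedron_sep_QM M (φ := Prod.snd) (ψ := fun p => (Real.sqrt 3 : ℂ) * p.1 - p.2)
      differentiable_snd (by fun_prop)

theorem isAnalyticPolyhedron_Z2 (M : ℝ) : IsAnalyticPolyhedron (Z2 M) := by
  simpa only [Z2, phi1_eq_re, phi2_eq_re] using
    isAnalyticPolyhedron_sep_QM M (φ := fun p => -(Real.sqrt 3 : ℂ) * p.1 - p.2) (ψ := Prod.snd)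
      (by fun_prop) differentiable_snd

theorem isAnalyticPolyhedron_Z3 (M : ℝ) : IsAnalyticPolyhedron (Z3 M) := by
  simpa only [Z3, phi2_eq_re, phi3_eq_re] using
    isAnalyticPolyhedron_sep_QM M (φ := fun p => (Real.sqrt 3 : ℂ) * p.1 - p.2)
      (ψ := fun p => -(Real.sqrt 3 : ℂ) * p.1 - p.2) (by fun_prop) (by fun_prop)

theorem stmt_5_general (M : ℝ) (Z : Set (ℂ × ℂ))
    (hZ : Z = Z1 M ∨ Z = Z2 M ∨ Z = Z3 M) :
    ∃ (m : ℕ) (f : Fin m → (ℂ × ℂ → ℂ)),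
      (∀ j, Differentiable ℂ (f j)) ∧
      Z = {z : ℂ × ℂ | ∀ j, ‖f j z‖ ≤ 1} := by
  rcases hZ with rfl | rfl | rfl
  exacts [isAnalyticPolyhedron_Z1 M, isAnalyticPolyhedron_Z2 M, isAnalyticPolyhedron_Z3 M]

/-- each sector `Z_λ` (λ = 1,2,3) of the standard Stein trisection of `Q_M` is
an analytic polyhedron: it is cut out, inside ℂ², by the conditions `|f_j| ≤ 1` for finitely
many functions `f_j : ℂ² → ℂ` that are holomorphic on all of ℂ². -/
theorem stmt_5 (M : ℝ) (hM : 0 < M) (Z : Set (ℂ × ℂ))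
    (hZ : Z = Z1 M ∨ Z = Z2 M ∨ Z = Z3 M) :
    ∃ (m : ℕ) (f : Fin m → (ℂ × ℂ → ℂ)),
      (∀ j, Differentiable ℂ (f j)) ∧
      Z = {z : ℂ × ℂ | ∀ j, ‖f j z‖ ≤ 1} :=
  stmt_5_general M Z hZ
end

section
/- Let n ≥ 1 be an integer, let ε ∈ ℂ with ε ≠ 0, and let f : ℂ → ℂ be f(z) = z^{n+1} − ε(n+1)z. For every ζ₀ ∈ ℂ with ζ₀^n = ε, the fiber of f over the critical value f(ζ₀), namely {z ∈ ℂ : f(z) = f(ζ₀)}, has exactly n elements. (Thus f is a simple branched covering: each critical fiber contains exactly one critical point, at which exactly two sheets come together.) -/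
/-!
The fiber of `f` over `f ζ₀` is the zero set of the degree `n + 1` polynomial `f - f ζ₀`.
Since `f' ζ₀ = 0 ≠ f'' ζ₀`, the point `ζ₀` is a double root of it, and every other root is simple:
a critical point `z` satisfies `z ^ n = ε`, hence `f z = -n ε z`, so `z` is determined by its
critical value. Counting the `n + 1` roots with multiplicity leaves `n` distinct ones.
-/

open Polynomial

theorem Multiset.card_toFinset_add_one_of_count {α : Type*} [DecidableEq α] {s : Multiset α}
    {a : α} (ha : s.count a = 2) (hs : ∀ b ∈ s, b ≠ a → s.count b = 1) :
    s.toFinset.card + 1 = card s := by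
  have hs_eq : s = a ::ₘ s.dedup := by
    ext b
    rw [count_cons, count_dedup]
    by_cases hb : b = a
    · subst hb
      simp [ha, ← count_pos]
    · by_cases hbs : b ∈ s <;> simp [hb, hbs, hs]
  conv_rhs => rw [hs_eq]
  rw [card_cons, card_toFinset]

namespace Polynomial

section RootMultiplicity

variable {R : Type*} [CommRing R]

theorem rootMultiplicity_eq_two {p : R[X]} {t : R} (hp : p ≠ 0) (h0 : p.IsRoot t)
    (h1 : (derivative p).IsRoot t) (h2 : ¬ (derivative (derivative p)).IsRoot t) :
    p.rootMultiplicity t = 2 := by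
  have one_lt : 1 < p.rootMultiplicity t := (one_lt_rootMultiplicity_iff_isRoot hp).2 ⟨h0, h1⟩
  have not_two_lt : ¬ 2 < p.rootMultiplicity t :=
    fun h ↦ h2 (isRoot_iterate_derivative_of_lt_rootMultiplicity h)
  omega

theorem rootMultiplicity_eq_one {p : R[X]} {t : R} (hp : p ≠ 0) (h0 : p.IsRoot t)
    (h1 : ¬ (derivative p).IsRoot t) : p.rootMultiplicity t = 1 := by
  have pos : 0 < p.rootMultiplicity t := (rootMultiplicity_pos hp).2 h0
  have not_one_lt : ¬ 1 < p.rootMultiplicity t :=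
    fun h ↦ h1 ((one_lt_rootMultiplicity_iff_isRoot hp).1 h).2
  omega

end RootMultiplicity

theorem ncard_fiber_eq_natDegree_sub_one {K : Type*} [Field K] [IsAlgClosed K] {q : K[X]} {a : K}
    (h1 : (derivative q).IsRoot a) (h2 : ¬ (derivative (derivative q)).IsRoot a)
    (hcrit : ∀ z, (derivative q).IsRoot z → q.eval z = q.eval a → z = a) :
    {z | q.eval z = q.eval a}.ncard = q.natDegree - 1 := by
  classical
  set p := q - C (q.eval a)
  have hp_deriv : derivative p = derivative q := by simp [p]
  have hp0 : p ≠ 0 := fun h ↦ h2 (by rw [← hp_deriv, h]; simp)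
  have hroot : ∀ z, p.IsRoot z ↔ q.eval z = q.eval a := by simp [p, sub_eq_zero]
  have hfiber : {z | q.eval z = q.eval a} = p.roots.toFinset := by
    ext z
    rw [Set.mem_ofPred_eq, Finset.mem_coe, Multiset.mem_toFinset, mem_roots hp0, hroot]
  have hdouble : p.roots.count a = 2 := by
    rw [count_roots]
    exact rootMultiplicity_eq_two hp0 ((hroot a).2 rfl) (by rwa [hp_deriv]) (by rwa [hp_deriv])
  have hsimple : ∀ b ∈ p.roots, b ≠ a → p.roots.count b = 1 := by
    intro b hb hba
    have hpb := isRoot_of_mem_roots hb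
    rw [count_roots]
    exact rootMultiplicity_eq_one hp0 hpb
      fun hb' ↦ hba (hcrit b (by rwa [← hp_deriv]) ((hroot b).1 hpb))
  have hcard := Multiset.card_toFinset_add_one_of_count hdouble hsimple
  have hdeg : p.natDegree = q.natDegree := natDegree_sub_C
  rw [hfiber, Set.ncard_coe_finset, ← hdeg, ← IsAlgClosed.card_roots_eq_natDegree]
  omega

section BranchModel

variable {K : Type*} [Field K]

noncomputable def branchModel (n : ℕ) (ε : K) : K[X] := X ^ (n + 1) - C (ε * (n + 1)) * X

@[simp]
theorem eval_branchModel (n : ℕ) (ε z : K) :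
    (branchModel n ε).eval z = z ^ (n + 1) - ε * (n + 1) * z := by
  simp [branchModel]

theorem derivative_branchModel (n : ℕ) (ε : K) :
    derivative (branchModel n ε) = C ((n : K) + 1) * (X ^ n - C ε) := by
  rw [branchModel, derivative_sub, derivative_X_pow, derivative_C_mul_X, add_tsub_cancel_right,
    Nat.cast_succ, mul_sub, ← C_mul, mul_comm ε]

theorem derivative_derivative_branchModel (n : ℕ) (ε : K) :
    derivative (derivative (branchModel n ε)) = C ((n : K) + 1) * (C (n : K) * X ^ (n - 1)) := by
  rw [derivative_branchModel, derivative_C_mul, derivative_sub, derivative_X_pow, derivative_C,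
    sub_zero]

theorem natDegree_branchModel {n : ℕ} (hn : 1 ≤ n) (ε : K) :
    (branchModel n ε).natDegree = n + 1 := by
  unfold branchModel
  compute_degree!
  simp [Nat.one_le_iff_ne_zero.1 hn]

variable [CharZero K]

theorem isRoot_derivative_branchModel_iff {n : ℕ} {ε z : K} :
    (derivative (branchModel n ε)).IsRoot z ↔ z ^ n = ε := by
  rw [IsRoot, derivative_branchModel, eval_mul, eval_C, mul_eq_zero, eval_sub, eval_pow, eval_X,
    eval_C, sub_eq_zero, or_iff_right (Nat.cast_add_one_ne_zero n)]

theorem not_isRoot_derivative_derivative_branchModel {n : ℕ} (hn : n ≠ 0) (ε : K) {z : K}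
    (hz : z ≠ 0) : ¬ (derivative (derivative (branchModel n ε))).IsRoot z := by
  rw [IsRoot, derivative_derivative_branchModel, eval_mul, eval_C, eval_mul, eval_C, eval_pow,
    eval_X]
  exact mul_ne_zero (Nat.cast_add_one_ne_zero n)
    (mul_ne_zero (Nat.cast_ne_zero.2 hn) (pow_ne_zero _ hz))

theorem eq_of_isRoot_derivative_branchModel {n : ℕ} (hn : n ≠ 0) {ε z w : K} (hε : ε ≠ 0)
    (hz : z ^ n = ε) (hw : w ^ n = ε)
    (hzw : (branchModel n ε).eval z = (branchModel n ε).eval w) : z = w := by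
  have crit_val : ∀ u : K, u ^ n = ε → (branchModel n ε).eval u = -(ε * n) * u := by
    intro u hu
    rw [eval_branchModel, pow_succ, hu]
    ring
  rw [crit_val z hz, crit_val w hw] at hzw
  exact mul_left_cancel₀ (neg_ne_zero.2 (mul_ne_zero hε (Nat.cast_ne_zero.2 hn))) hzw

end BranchModel

end Polynomial

/-- for `f(z) = z^{n+1} − ε(n+1)z` with `n ≥ 1` and `ε ≠ 0`, the fiber of `f`
over the critical value `f(ζ₀)`, for any `ζ₀` with `ζ₀^n = ε`, has exactly `n` elements. -/
theorem stmt_8 (n : ℕ) (hn : 1 ≤ n) (ε : ℂ) (hε : ε ≠ 0) (ζ₀ : ℂ) (hζ₀ : ζ₀ ^ n = ε) :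
    {z : ℂ | z ^ (n + 1) - ε * (n + 1) * z = ζ₀ ^ (n + 1) - ε * (n + 1) * ζ₀}.ncard = n := by
  have hζ₀_ne : ζ₀ ≠ 0 := by
    rintro rfl
    exact hε (by rw [← hζ₀, zero_pow (by omega)])
  have hfiber := ncard_fiber_eq_natDegree_sub_one (q := branchModel n ε)
    (isRoot_derivative_branchModel_iff.2 hζ₀)
    (not_isRoot_derivative_derivative_branchModel (by omega) ε hζ₀_ne)
    fun z hz hzζ₀ ↦ eq_of_isRoot_derivative_branchModel (by omega) hε
      (isRoot_derivative_branchModel_iff.1 hz) hζ₀ hzζ₀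
  simpa [natDegree_branchModel hn] using hfiber
end
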